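/- The map φ : H₂ → H₃ defined by φ([[a,b],[0,a²]]) = [[a^μ, a^{μ-1}b + ½a^{μ+1} - ½a^μ],[0, a^{μ+1}]] is a group homomorphism, i.e. φ(XY) = φ(X)φ(Y) for all X, Y ∈ H₂. -/
import Mathlib


open Matrix

/-- The real odd root `a ↦ a^μ`, `μ = 1/(2^{n-1}-1)` (an odd integer), i.e.
`sign(a)·|a|^μ`. -/
noncomputable def oddRoot (n : ℕ) (a : ℝ) : ℝ :=
  Real.sign a * |a| ^ (((2 : ℝ) ^ (n - 1) - 1)⁻¹)

lemma real_sign_mul (x y : ℝ) : Real.sign (x * y) = Real.sign x * Real.sign y := by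
  rcases lt_trichotomy x 0 with hx | rfl | hx <;> rcases lt_trichotomy y 0 with hy | rfl | hy <;>
    simp [Real.sign_of_pos, Real.sign_of_neg, mul_pos, mul_pos_of_neg_of_neg,
      mul_neg_of_pos_of_neg, mul_neg_of_neg_of_pos, *]

lemma oddRoot_mul (n : ℕ) (x y : ℝ) :
    oddRoot n (x * y) = oddRoot n x * oddRoot n y := by
  unfold oddRoot
  rw [real_sign_mul, abs_mul, Real.mul_rpow (abs_nonneg x) (abs_nonneg y)]
  ring

/-- The map `φ([[a,b],[0,a²]]) = [[a^μ, a^{μ-1}b + ½a^{μ+1} - ½a^μ],[0, a^{μ+1}]]`. -/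
noncomputable def phiMap (n : ℕ) (M : Matrix (Fin 2) (Fin 2) ℝ) : Matrix (Fin 2) (Fin 2) ℝ :=
  !![oddRoot n (M 0 0),
     oddRoot n (M 0 0) * (M 0 0)⁻¹ * (M 0 1)
       + (1/2 : ℝ) * (oddRoot n (M 0 0) * (M 0 0)) - (1/2 : ℝ) * oddRoot n (M 0 0);
     0, oddRoot n (M 0 0) * (M 0 0)]

/-- `φ` is a group homomorphism on
`H₂ = {[[a,b],[0,a²]] : a ≠ 0}`: `φ(XY) = φ(X)φ(Y)`. -/
theorem phiMap_hom (n : ℕ) (hn : 2 < n) :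
    ∀ a b a' b' : ℝ, a ≠ 0 → a' ≠ 0 →
      phiMap n (!![a, b; 0, a ^ 2] * !![a', b'; 0, a' ^ 2])
        = phiMap n !![a, b; 0, a ^ 2] * phiMap n !![a', b'; 0, a' ^ 2] := by
  intro a b a' b' ha ha'
  simp only [phiMap, Matrix.mul_fin_two, Matrix.of_apply, Matrix.cons_val', Matrix.cons_val_zero,
    Matrix.cons_val_one, Matrix.head_cons, Matrix.empty_val', Matrix.cons_val_fin_one,
    Matrix.head_fin_const]
  rw [show a * a' + b * 0 = a * a' by ring, oddRoot_mul]
  ext i j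
  fin_cases i <;> fin_cases j <;>
    simp only [Matrix.of_apply, Matrix.cons_val', Matrix.cons_val_zero, Matrix.cons_val_one,
      Matrix.head_cons, Matrix.empty_val', Matrix.cons_val_fin_one, Matrix.head_fin_const,
      Fin.isValue, Fin.zero_eta, Fin.mk_one] <;>
    field_simp <;> ring
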